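/- Let n ≥ 2 and let ε : {1,…,n−1} → {1,−1} be arbitrary. Let L be the n×n integer matrix with L_{11} = L_{nn} = 2, L_{ii} = 3 for 1 < i < n, L_{i,i+1} = L_{i+1,i} = ε(i) for 1 ≤ i ≤ n−1, and all other entries 0. Then det L = fib(2n), where fib denotes the Fibonacci sequence (fib 0 = 0, fib 1 = 1). -/

import Mathlib

/-!
Expanding along the first column gives the continuant recurrence
`D (n + 2) = a₀ D (n + 1) - b₀ c₀ D n` for tridiagonal determinants, in which the signs enter
only through `ε ^ 2 = 1`. With diagonal `3, …, 3, 2` this is the recurrence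
`D (m + 2) = 3 D (m + 1) - D m` of the odd-index Fibonacci numbers, so `D m = F (2m + 1)`;
one further step with leading entry `2` gives `2 F (2n - 1) - F (2n - 3) = F (2n)`.
-/

open Matrix

namespace Matrix

variable {R : Type*} [CommRing R]

def tridiagonal (n : ℕ) (a b c : ℕ → R) : Matrix (Fin n) (Fin n) R :=
  of fun i j =>
    if (i : ℕ) = j then a i
    else if (i : ℕ) + 1 = j then b i
    else if (j : ℕ) + 1 = i then c j
    else 0

theorem tridiagonal_submatrix_succ_succ (n : ℕ) (a b c : ℕ → R) :
    (tridiagonal (n + 1) a b c).submatrix Fin.succ Fin.succ =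
      tridiagonal n (fun i => a (i + 1)) (fun i => b (i + 1)) (fun i => c (i + 1)) := by
  ext i j
  simp [tridiagonal]

theorem det_tridiagonal_succ_succ (n : ℕ) (a b c : ℕ → R) :
    (tridiagonal (n + 2) a b c).det =
      a 0 * (tridiagonal (n + 1) (fun i => a (i + 1)) (fun i => b (i + 1)) (fun i => c (i + 1))).det
        - b 0 * c 0 *
          (tridiagonal n (fun i => a (i + 2)) (fun i => b (i + 2)) (fun i => c (i + 2))).det := by
  set M := tridiagonal (n + 2) a b c with hM
  have hminor : (M.submatrix (Fin.succAbove 1) Fin.succ).det =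
      b 0 * (tridiagonal n (fun i => a (i + 2)) (fun i => b (i + 2)) (fun i => c (i + 2))).det := by
    have hrow : ∀ j : Fin n, M 0 j.succ.succ = 0 := fun j => by simp [M, tridiagonal]
    have h01 : M 0 1 = b 0 := by simp [M, tridiagonal]
    have hsub : (M.submatrix (Fin.succAbove 1) Fin.succ).submatrix Fin.succ Fin.succ =
        (M.submatrix Fin.succ Fin.succ).submatrix Fin.succ Fin.succ := by
      ext i j; simp [Fin.succAbove, Fin.lt_def]
    rw [det_succ_row_zero, Fin.sum_univ_succ, Fin.succAbove_zero, hsub, hM,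
      tridiagonal_submatrix_succ_succ, tridiagonal_submatrix_succ_succ, ← hM]
    simp [hrow, h01]
  have hcol : ∀ i : Fin n, M i.succ.succ 0 = 0 := fun i => by simp [M, tridiagonal]
  have h00 : M 0 0 = a 0 := by simp [M, tridiagonal]
  have h10 : M 1 0 = c 0 := by simp [M, tridiagonal]
  rw [det_succ_column_zero, Fin.sum_univ_succ, Fin.sum_univ_succ]
  simp only [hcol, mul_zero, zero_mul, Finset.sum_const_zero, add_zero, Fin.succ_zero_eq_one,
    Fin.succAbove_zero, Fin.val_zero, Fin.val_one, pow_zero, pow_one, h00, h10, hminor]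
  rw [hM, tridiagonal_submatrix_succ_succ]
  ring

theorem det_tridiagonal_eq_fib_odd (m : ℕ) (a b c : ℕ → R)
    (ha : ∀ i < m, a i = if i + 1 = m then 2 else 3)
    (hbc : ∀ i, i + 1 < m → b i * c i = 1) :
    (tridiagonal m a b c).det = Nat.fib (2 * m + 1) := by
  induction m using Nat.twoStepInduction generalizing a b c with
  | zero => simp
  | one => simp [tridiagonal, ha 0 one_pos, Nat.fib_add_two]
  | more m ih₀ ih₁ =>
    rw [det_tridiagonal_succ_succ,
      ih₁ _ _ _ (fun i hi => by rw [ha (i + 1) (by omega)]; simp)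
        (fun i hi => hbc (i + 1) (by omega)),
      ih₀ _ _ _ (fun i hi => by rw [ha (i + 2) (by omega)]; simp)
        (fun i hi => hbc (i + 2) (by omega)),
      ha 0 (by omega), if_neg (by omega), hbc 0 (by omega),
      show 2 * (m + 2) + 1 = 2 * m + 1 + 4 by ring, show 2 * (m + 1) + 1 = 2 * m + 1 + 2 by ring]
    simp only [Nat.fib_add_two, Nat.cast_add]
    ring

theorem det_tridiagonal_eq_fib_even (n : ℕ) (hn : 2 ≤ n) (a b c : ℕ → R)
    (ha : ∀ i < n, a i = if i = 0 ∨ i + 1 = n then 2 else 3)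
    (hbc : ∀ i, i + 1 < n → b i * c i = 1) :
    (tridiagonal n a b c).det = Nat.fib (2 * n) := by
  obtain ⟨m, rfl⟩ : ∃ m, n = m + 2 := ⟨n - 2, by omega⟩
  rw [det_tridiagonal_succ_succ,
    det_tridiagonal_eq_fib_odd _ _ _ _ (fun i hi => by rw [ha (i + 1) (by omega)]; simp)
      (fun i hi => hbc (i + 1) (by omega)),
    det_tridiagonal_eq_fib_odd _ _ _ _ (fun i hi => by rw [ha (i + 2) (by omega)]; simp)
      (fun i hi => hbc (i + 2) (by omega)),
    ha 0 (by omega), if_pos (Or.inl rfl), hbc 0 (by omega),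
    show 2 * (m + 2) = 2 * m + 1 + 3 by ring, show 2 * (m + 1) + 1 = 2 * m + 1 + 2 by ring]
  simp only [Nat.fib_add_two, Nat.cast_add]
  ring

end Matrix

/-- Lemma `OrderFan`: the reduced signed Laplacian `L` of an arbitrary signed fan graph
`(F_n)_φ` (diagonal `2, 3, …, 3, 2`, off-diagonal signs `ε(i) ∈ {±1}` on the
tridiagonal) has determinant `fib(2n)`. -/
theorem stmt12 (n : ℕ) (hn : 2 ≤ n) (ε : ℕ → ℤ)
    (hε : ∀ i, 1 ≤ i → i ≤ n - 1 → ε i = 1 ∨ ε i = -1)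
    (L : Matrix (Fin n) (Fin n) ℤ)
    (hL : ∀ i j : Fin n, L i j =
      if i = j then (if (i : ℕ) = 0 ∨ (i : ℕ) = n - 1 then 2 else 3)
      else if (i : ℕ) + 1 = (j : ℕ) then ε ((i : ℕ) + 1)
      else if (j : ℕ) + 1 = (i : ℕ) then ε ((j : ℕ) + 1)
      else 0) :
    L.det = (Nat.fib (2 * n) : ℤ) := by
  have hL_eq : L = tridiagonal n (fun i => if i = 0 ∨ i = n - 1 then 2 else 3)
      (fun i => ε (i + 1)) (fun i => ε (i + 1)) := by
    ext i j
    simp [hL, tridiagonal, Fin.ext_iff]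
  rw [hL_eq]
  refine det_tridiagonal_eq_fib_even n hn _ _ _ (fun i hi => if_congr (by omega) rfl rfl)
    (fun i hi => ?_)
  rcases hε (i + 1) (by omega) (by omega) with h | h <;> simp [h]
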